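/- Let A, B be integral commutative lattice-ordered monoids (unit 1 of * is the lattice top), let M, N be finite many-valued structures over A, B respectively with truth filters {1_A}, {1_B}, and let g : M → N be a protomorphism. Then every existential-positive sentence ψ = ⋁ᵢ ∃x̄ ⋀ⱼ ∏ₖ R_{j,k}(x̄_{j,k}) (disjunction of ∧-*-primitive sentences) satisfies: the value of ψ in M equals 1_A implies the value of ψ in N equals 1_B. -/

import Mathlib

/-- The truth value of an existential-positive sentence
`⋁_{j} ∃x̄ ⋀_{i} ∏_{k} R_{j,i,k}(x̄_{j,i,k})` (disjunction of ∧-*-primitive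
sentences) in a finite many-valued structure over a lattice-ordered commutative
monoid: join over disjuncts and assignments, meet over conjuncts, monoid product
over the factors of each conjunct. -/
def epProdValue {A : Type*} [Lattice A] [CommMonoid A] {σ : Type*} (ar : σ → ℕ)
    {X : Type*} [Fintype X] [Nonempty X]
    (d : ℕ) (hd : 0 < d) (nv nc : Fin d → ℕ) (hnc : ∀ j, 0 < nc j)
    (np : ∀ j : Fin d, Fin (nc j) → ℕ)
    (sym : ∀ (j : Fin d) (i : Fin (nc j)), Fin (np j i) → σ)
    (args : ∀ (j : Fin d) (i : Fin (nc j)) (k : Fin (np j i)),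
      Fin (ar (sym j i k)) → Fin (nv j))
    (rel : ∀ s : σ, (Fin (ar s) → X) → A) : A :=
  haveI : Nonempty (Fin d) := Fin.pos_iff_nonempty.mp hd
  Finset.univ.sup' Finset.univ_nonempty fun j =>
    haveI : Nonempty (Fin (nc j)) := Fin.pos_iff_nonempty.mp (hnc j)
    Finset.univ.sup' Finset.univ_nonempty fun mbar : Fin (nv j) → X =>
      Finset.univ.inf' Finset.univ_nonempty fun i =>
        ∏ k : Fin (np j i), rel (sym j i k) fun l => mbar (args j i k l)

/- An existential-positive sentence has value `1` exactly when some disjunct `j` and some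
assignment `x̄` make every atom `R_{j,i,k}(x̄_{j,i,k})` true: for `⊔` this is primality of the
filter `{1}`, for `⊓` and `*` it is integrality. A protomorphism maps such a witness assignment
of `M` to one of `N`, as it preserves true atoms. -/

theorem Finset.exists_eq_of_sup'_eq {α ι : Type*} [SemilatticeSup α] {t : α}
    (ht : ∀ a b : α, a ⊔ b = t → a = t ∨ b = t) {s : Finset ι} (hs : s.Nonempty) {f : ι → α}
    (h : s.sup' hs f = t) : ∃ i ∈ s, f i = t := by
  induction hs using Finset.Nonempty.cons_induction with
  | singleton i => exact ⟨i, Finset.mem_singleton_self i, by simpa using h⟩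
  | cons i s _ hs ih =>
    rw [Finset.sup'_cons hs] at h
    rcases ht _ _ h with hi | hs
    · exact ⟨i, Finset.mem_cons_self i s, hi⟩
    · obtain ⟨j, hj, hfj⟩ := ih hs
      exact ⟨j, Finset.mem_cons_of_mem hj, hfj⟩

theorem Finset.forall_eq_of_inf'_eq {α ι : Type*} [SemilatticeInf α] {t : α}
    (ht : ∀ a : α, a ≤ t) {s : Finset ι} (hs : s.Nonempty) {f : ι → α}
    (h : s.inf' hs f = t) : ∀ i ∈ s, f i = t :=
  fun _ hi => le_antisymm (ht _) (h ▸ Finset.inf'_le f hi)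

section EpProdValue

variable {A : Type*} [Lattice A] [CommMonoid A]
  {σ : Type*} {ar : σ → ℕ} {X : Type*} [Fintype X] [Nonempty X]
  {d : ℕ} {hd : 0 < d} {nv nc : Fin d → ℕ} {hnc : ∀ j, 0 < nc j}
  {np : ∀ j : Fin d, Fin (nc j) → ℕ} {sym : ∀ (j : Fin d) (i : Fin (nc j)), Fin (np j i) → σ}
  {args : ∀ (j : Fin d) (i : Fin (nc j)) (k : Fin (np j i)), Fin (ar (sym j i k)) → Fin (nv j)}
  {rel : ∀ s : σ, (Fin (ar s) → X) → A}

theorem exists_atoms_eq_one_of_epProdValue_eq_one [MulLeftMono A] (hint : ∀ a : A, a ≤ 1)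
    (hprime : ∀ a b : A, a ⊔ b = 1 → a = 1 ∨ b = 1)
    (h : epProdValue ar d hd nv nc hnc np sym args rel = 1) :
    ∃ (j : Fin d) (xbar : Fin (nv j) → X),
      ∀ i k, rel (sym j i k) (xbar ∘ args j i k) = 1 := by
  obtain ⟨j, -, hj⟩ := Finset.exists_eq_of_sup'_eq hprime _ h
  obtain ⟨xbar, -, hxbar⟩ := Finset.exists_eq_of_sup'_eq hprime _ hj
  refine ⟨j, xbar, fun i k => ?_⟩
  have hconj := Finset.forall_eq_of_inf'_eq hint _ hxbar i (Finset.mem_univ i)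
  exact (Finset.prod_eq_one_iff_of_le_one' fun _ _ => hint _).mp hconj k (Finset.mem_univ k)

theorem epProdValue_eq_one_of_atoms_eq_one (hint : ∀ a : A, a ≤ 1)
    (j : Fin d) (xbar : Fin (nv j) → X)
    (hatoms : ∀ i k, rel (sym j i k) (xbar ∘ args j i k) = 1) :
    epProdValue ar d hd nv nc hnc np sym args rel = 1 := by
  refine le_antisymm (Finset.sup'_le _ _ fun _ _ => Finset.sup'_le _ _ fun _ _ => hint _) ?_
  refine Finset.le_sup'_of_le _ (Finset.mem_univ j) <|
    Finset.le_sup'_of_le _ (Finset.mem_univ xbar) <| Finset.le_inf' _ _ fun i _ => ?_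
  exact (Finset.prod_eq_one fun k _ => hatoms i k).ge

end EpProdValue

theorem protomorphism_preserves_existential_positive_integral_general
    {A : Type*} [Lattice A] [CommMonoid A] [CovariantClass A A (· * ·) (· ≤ ·)]
    (hAint : ∀ a : A, a ≤ 1)
    (hAprime : ∀ a b : A, a ⊔ b = 1 → a = 1 ∨ b = 1)
    {B : Type*} [Lattice B] [CommMonoid B]
    (hBint : ∀ b : B, b ≤ 1)
    {σ : Type*} (ar : σ → ℕ)
    {M : Type*} [Fintype M] [Nonempty M]
    {N : Type*} [Fintype N] [Nonempty N]
    (relM : ∀ s : σ, (Fin (ar s) → M) → A)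
    (relN : ∀ s : σ, (Fin (ar s) → N) → B)
    (g : M → N)
    (hproto : ∀ (s : σ) (mbar : Fin (ar s) → M), relM s mbar = 1 → relN s (g ∘ mbar) = 1)
    (d : ℕ) (hd : 0 < d) (nv nc : Fin d → ℕ) (hnc : ∀ j, 0 < nc j)
    (np : ∀ j : Fin d, Fin (nc j) → ℕ)
    (sym : ∀ (j : Fin d) (i : Fin (nc j)), Fin (np j i) → σ)
    (args : ∀ (j : Fin d) (i : Fin (nc j)) (k : Fin (np j i)),
      Fin (ar (sym j i k)) → Fin (nv j)) :
    epProdValue ar d hd nv nc hnc np sym args relM = 1 →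
      epProdValue ar d hd nv nc hnc np sym args relN = 1 := by
  intro h
  obtain ⟨j, mbar, hatoms⟩ := exists_atoms_eq_one_of_epProdValue_eq_one hAint hAprime h
  exact epProdValue_eq_one_of_atoms_eq_one hBint j (g ∘ mbar) fun i k => hproto _ _ (hatoms i k)

/-- Let `A`, `B` be integral commutative lattice-ordered monoids whose truth filter
`{1}` is prime with respect to `⊔`, `M`, `N` finite structures over `A`, `B`, and
`g : M → N` a protomorphism (atomic facts with value `1_A` map to value `1_B`).
Then every existential-positive sentence whose value in `M` is `1_A` has value
`1_B` in `N`. -/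
theorem protomorphism_preserves_existential_positive_integral
    {A : Type*} [Lattice A] [CommMonoid A] [CovariantClass A A (· * ·) (· ≤ ·)]
    (hAint : ∀ a : A, a ≤ 1)
    (hAprime : ∀ a b : A, a ⊔ b = 1 → a = 1 ∨ b = 1)
    {B : Type*} [Lattice B] [CommMonoid B] [CovariantClass B B (· * ·) (· ≤ ·)]
    (hBint : ∀ b : B, b ≤ 1)
    (hBprime : ∀ a b : B, a ⊔ b = 1 → a = 1 ∨ b = 1)
    {σ : Type*} (ar : σ → ℕ)
    {M : Type*} [Fintype M] [Nonempty M]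
    {N : Type*} [Fintype N] [Nonempty N]
    (relM : ∀ s : σ, (Fin (ar s) → M) → A)
    (relN : ∀ s : σ, (Fin (ar s) → N) → B)
    (g : M → N)
    (hproto : ∀ (s : σ) (mbar : Fin (ar s) → M), relM s mbar = 1 → relN s (g ∘ mbar) = 1)
    (d : ℕ) (hd : 0 < d) (nv nc : Fin d → ℕ) (hnc : ∀ j, 0 < nc j)
    (np : ∀ j : Fin d, Fin (nc j) → ℕ)
    (sym : ∀ (j : Fin d) (i : Fin (nc j)), Fin (np j i) → σ)
    (args : ∀ (j : Fin d) (i : Fin (nc j)) (k : Fin (np j i)),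
      Fin (ar (sym j i k)) → Fin (nv j)) :
    epProdValue ar d hd nv nc hnc np sym args relM = 1 →
      epProdValue ar d hd nv nc hnc np sym args relN = 1 :=
  protomorphism_preserves_existential_positive_integral_general hAint hAprime hBint ar relM relN g
    hproto d hd nv nc hnc np sym args
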